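/- arXiv:1111.3321 — 6 statements merged into one kernel-verified Lean document; each statement's English description precedes it below -/
import Mathlib

section
/- Let n ≥ 2, r > 0, and let q : Fin n → ℝ be nonnegative with ∑ q_i = n. Then (r/n) · ∑_i 1/(r + q_i) ≤ 1 - 1/(r + n). -/
open Finset

/-- The chord of the convex function `x ↦ 1 / (r + x)` over `[0, m]` lies above its graph. -/
theorem one_div_add_le_chord {r m x : ℝ} (hr : 0 < r) (hx : 0 ≤ x) (hxm : x ≤ m) :
    1 / (r + x) ≤ 1 / r - x / (r * (r + m)) := by
  have hrx : 0 < r + x := by linarith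
  have hrm : 0 < r + m := by linarith
  rw [div_sub_div _ _ hr.ne' (by positivity), div_le_div_iff₀ hrx (by positivity)]
  nlinarith [mul_nonneg hx (sub_nonneg.2 hxm)]

/-- Among nonnegative `q` with a given sum, `∑ 1 / (r + q i)` is largest when all the mass sits
on a single index. -/
theorem sum_one_div_add_le {ι : Type*} (s : Finset ι) {r : ℝ} (hr : 0 < r) {q : ι → ℝ}
    (hq : ∀ i ∈ s, 0 ≤ q i) :
    ∑ i ∈ s, 1 / (r + q i) ≤ ((#s : ℝ) - 1) / r + 1 / (r + ∑ i ∈ s, q i) := by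
  set S := ∑ i ∈ s, q i
  have hS : 0 ≤ S := sum_nonneg hq
  have hqS : ∀ i ∈ s, q i ≤ S := fun i hi => single_le_sum hq hi
  calc ∑ i ∈ s, 1 / (r + q i) ≤ ∑ i ∈ s, (1 / r - q i / (r * (r + S))) :=
        sum_le_sum fun i hi => one_div_add_le_chord hr (hq i hi) (hqS i hi)
    _ = ((#s : ℝ) - 1) / r + 1 / (r + S) := by
        have : r + S ≠ 0 := by positivity
        rw [sum_sub_distrib, sum_const, ← sum_div, nsmul_eq_mul]
        field_simp
        ring

/-- If `n ≥ 2`, `r > 0` and `q : Fin n → ℝ` is nonnegative with `∑ q i = n`, then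
`(r/n) · ∑ i, 1/(r + q i) ≤ 1 - 1/(r + n)`. -/
theorem stmt_0 (n : ℕ) (hn : 2 ≤ n) (r : ℝ) (hr : 0 < r) (q : Fin n → ℝ)
    (hq : ∀ i, 0 ≤ q i) (hsum : ∑ i, q i = (n : ℝ)) :
    (r / n) * ∑ i, 1 / (r + q i) ≤ 1 - 1 / (r + n) := by
  have hn0 : (0 : ℝ) < n := by exact_mod_cast (by omega : 0 < n)
  have hrn : r + n ≠ 0 := by positivity
  have hbound := sum_one_div_add_le univ hr fun i _ => hq i
  rw [hsum, card_univ, Fintype.card_fin] at hbound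
  calc (r / n) * ∑ i, 1 / (r + q i) ≤ (r / n) * (((n : ℝ) - 1) / r + 1 / (r + n)) := by
        gcongr
    _ = 1 - 1 / (r + n) := by
        field_simp
        ring
end

section
/- Let G be a finite connected simple graph on n vertices with S a proper nonempty subset of V(G), let r > 0, and W(S) = n + (r-1)|S| be the total fitness. Then the expected one-step change of φ under the Moran process equals ((r-1)/W(S)) · ∑_{xy ∈ E, x∈S, y∉S} 1/(deg(x)·deg(y)), where φ(X) = ∑_{x∈X} 1/deg(x). -/
open Finset

/-- Total fitness of the population when the mutant set is `S`:
`W(S) = r·|S| + (n - |S|) = n + (r-1)·|S|`. -/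
noncomputable def moranW {V : Type*} [Fintype V] (r : ℝ) (S : Finset V) : ℝ :=
  r * S.card + ((Fintype.card V : ℝ) - S.card)

/-- One-step transition probability of the Moran process on the graph `G` with mutant
fitness `r`: an individual `x` is chosen with probability proportional to its fitness
(`r` if `x ∈ S`, else `1`), and it reproduces onto a uniformly random neighbour `y`,
which becomes a mutant if `x` is a mutant and a non-mutant otherwise. -/
noncomputable def moranP {V : Type*} [Fintype V] [DecidableEq V] (G : SimpleGraph V)
    [DecidableRel G.Adj] (r : ℝ) (S T : Finset V) : ℝ :=
  ∑ x : V, ∑ y ∈ G.neighborFinset x,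
    (if x ∈ S then r else 1) / (moranW r S * G.degree x) *
      (if (if x ∈ S then insert y S else S.erase y) = T then 1 else 0)

/-- The potential function `φ(X) = ∑_{x ∈ X} 1/deg x`. -/
noncomputable def moranPhi {V : Type*} [Fintype V] (G : SimpleGraph V) [DecidableRel G.Adj]
    (X : Finset V) : ℝ :=
  ∑ x ∈ X, (1 : ℝ) / G.degree x

/-- The expected one-step change of `φ` under the Moran process on state `S` equals
`((r-1)/W(S)) · ∑_{xy ∈ E, x ∈ S, y ∉ S} 1/(deg x · deg y)`. -/
theorem stmt_5 {V : Type*} [Fintype V] [DecidableEq V] (G : SimpleGraph V)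
    [DecidableRel G.Adj] (hG : G.Connected) (r : ℝ) (hr : 0 < r)
    (S : Finset V) (hS : S ≠ ∅) (hS' : S ≠ Finset.univ) :
    ∑ T : Finset V, moranP G r S T * (moranPhi G T - moranPhi G S) =
      (r - 1) / moranW r S *
        ∑ x ∈ S, ∑ y ∈ G.neighborFinset x \ S, 1 / ((G.degree x : ℝ) * G.degree y) := by
  classical
  set W := moranW r S with hW
  have h1 : (∑ T : Finset V, moranP G r S T * (moranPhi G T - moranPhi G S)) =
      ∑ x : V, ∑ y ∈ G.neighborFinset x,
        (if x ∈ S then r else 1) / (W * G.degree x) *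
          (moranPhi G (if x ∈ S then insert y S else S.erase y) - moranPhi G S) := by
    unfold moranP
    simp only [Finset.sum_mul]
    rw [Finset.sum_comm]
    refine Finset.sum_congr rfl fun x _ => ?_
    rw [Finset.sum_comm]
    refine Finset.sum_congr rfl fun y _ => ?_
    simp [mul_ite, ite_mul, Finset.sum_ite_eq, ← hW]
  rw [h1, ← Finset.sum_add_sum_compl S]
  have hA : ∀ x ∈ S, (∑ y ∈ G.neighborFinset x,
      (if x ∈ S then r else 1) / (W * G.degree x) *
        (moranPhi G (if x ∈ S then insert y S else S.erase y) - moranPhi G S)) =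
      ∑ y ∈ G.neighborFinset x \ S, r / (W * G.degree x) * (1 / G.degree y) := by
    intro x hx
    rw [← Finset.sum_subset (Finset.sdiff_subset)]
    · refine Finset.sum_congr rfl fun y hy => ?_
      have hy' : y ∉ S := (Finset.mem_sdiff.mp hy).2
      simp only [hx, if_true]
      rw [moranPhi, Finset.sum_insert hy', ← moranPhi]
      ring
    · intro y hy hy'
      have hyS : y ∈ S := by
        by_contra h
        exact hy' (Finset.mem_sdiff.mpr ⟨hy, h⟩)
      simp [hx, Finset.insert_eq_self.mpr hyS]
  have hB : ∀ x ∈ Sᶜ, (∑ y ∈ G.neighborFinset x,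
      (if x ∈ S then r else 1) / (W * G.degree x) *
        (moranPhi G (if x ∈ S then insert y S else S.erase y) - moranPhi G S)) =
      ∑ y ∈ G.neighborFinset x ∩ S, 1 / (W * G.degree x) * (-(1 / G.degree y)) := by
    intro x hx
    have hxS : x ∉ S := Finset.mem_compl.mp hx
    rw [← Finset.sum_subset (Finset.inter_subset_left)]
    · refine Finset.sum_congr rfl fun y hy => ?_
      have hy' : y ∈ S := (Finset.mem_inter.mp hy).2
      simp only [hxS, if_false]
      rw [moranPhi, Finset.sum_erase_eq_sub hy', ← moranPhi]
      ring
    · intro y hy hy'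
      have hyS : y ∉ S := by
        by_contra h
        exact hy' (Finset.mem_inter.mpr ⟨hy, h⟩)
      simp [hxS, Finset.erase_eq_self.mpr hyS]
  rw [Finset.sum_congr rfl hA, Finset.sum_congr rfl hB]
  have hswap : (∑ x ∈ Sᶜ, ∑ y ∈ G.neighborFinset x ∩ S,
      1 / (W * G.degree x) * (-(1 / (G.degree y : ℝ)))) =
      ∑ y ∈ S, ∑ x ∈ G.neighborFinset y \ S,
        1 / (W * G.degree x) * (-(1 / (G.degree y : ℝ))) := by
    refine Finset.sum_comm' fun x y => ?_
    simp only [Finset.mem_compl, Finset.mem_inter, Finset.mem_sdiff,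
      SimpleGraph.mem_neighborFinset]
    constructor
    · rintro ⟨hx, hy1, hy2⟩; exact ⟨⟨hy1.symm, hx⟩, hy2⟩
    · rintro ⟨⟨h1, h2⟩, h3⟩; exact ⟨h2, h1.symm, h3⟩
  rw [hswap, Finset.mul_sum, ← Finset.sum_add_distrib]
  refine Finset.sum_congr rfl fun x hx => ?_
  rw [Finset.mul_sum, ← Finset.sum_add_distrib]
  refine Finset.sum_congr rfl fun y hy => ?_
  simp only [div_eq_mul_inv, mul_inv, one_mul]
  ring
end

section
/- Let (Y_i) be a Markov chain on a finite state space Ω with a nonnegative function ψ : Ω → ℝ and constants k₁, k₂ > 0 such that ψ(Y₀) ≤ k₁ almost surely and E[ψ(Y_i) − ψ(Y_{i+1}) | Y_i = S] ≥ k₂ whenever ψ(S) > 0. Then the hitting time τ = min{i : ψ(Y_i) = 0} satisfies E[τ] ≤ k₁/k₂. -/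
/-- Drift theorem (Hajek / He–Yao style), for a Markov chain on a finite state space `Ω`
with transition matrix `P`.  Given a nonnegative potential `ψ` vanishing on some state,
with `ψ ≤ k₁` on the set `I` of possible initial states, and one-step expected decrease
of `ψ` at least `k₂ > 0` from every state with `ψ > 0`, the expected hitting time `h` of
the set `{ψ = 0}` (the nonnegative solution of the standard hitting-time recurrence)
satisfies `h S ≤ k₁/k₂` for every initial state `S ∈ I`. -/
theorem stmt_7 {Ω : Type*} [Fintype Ω] (P : Ω → Ω → ℝ)
    (hP0 : ∀ S T, 0 ≤ P S T) (hP1 : ∀ S, ∑ T, P S T = 1)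
    (I : Set Ω) (ψ : Ω → ℝ) (k₁ k₂ : ℝ) (hk₁ : 0 < k₁) (hk₂ : 0 < k₂)
    (hψ0 : ∀ S, 0 ≤ ψ S) (hzero : ∃ S, ψ S = 0)
    (hinit : ∀ S ∈ I, ψ S ≤ k₁)
    (hdrift : ∀ S, 0 < ψ S → k₂ ≤ ψ S - ∑ T, P S T * ψ T)
    (h : Ω → ℝ) (hpos : ∀ S, 0 ≤ h S)
    (habs : ∀ S, ψ S = 0 → h S = 0)
    (hrec : ∀ S, 0 < ψ S → h S = 1 + ∑ T, P S T * h T) :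
    ∀ S ∈ I, h S ≤ k₁ / k₂ := by
  have key : ∀ S, k₂ * h S ≤ ψ S := by
    by_contra hcon
    push_neg at hcon
    obtain ⟨S₀, hS₀⟩ := hcon
    set g : Ω → ℝ := fun S => ψ S - k₂ * h S with hg
    have hne : (Finset.univ : Finset Ω).Nonempty := ⟨S₀, Finset.mem_univ _⟩
    obtain ⟨b, -, hbmin⟩ := Finset.exists_min_image Finset.univ g hne
    have hbneg : g b < 0 := lt_of_le_of_lt (hbmin S₀ (Finset.mem_univ _)) (by
      simp only [hg]; linarith)
    set A : Finset Ω := Finset.univ.filter (fun S => g S = g b) with hA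
    -- key facts about states in A
    have hAfacts : ∀ S ∈ A, (0 < ψ S) ∧ ∀ T, 0 < P S T → T ∈ A := by
      intro S hS
      have hgS : g S = g b := (Finset.mem_filter.mp hS).2
      have hψS : 0 < ψ S := by
        rcases (hψ0 S).lt_or_eq with hp | hp
        · exact hp
        · exfalso
          have := habs S hp.symm
          have : g S = 0 := by simp [hg, this, ← hp]
          linarith [hgS ▸ this ▸ hbneg]
      refine ⟨hψS, ?_⟩
      have hdr := hdrift S hψS
      have hr := hrec S hψS
      have hsum : ∑ T, P S T * g T ≤ g S := by
        have e1 : ∑ T, P S T * g T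
            = (∑ T, P S T * ψ T) - k₂ * ∑ T, P S T * h T := by
          rw [Finset.mul_sum, ← Finset.sum_sub_distrib]
          refine Finset.sum_congr rfl fun T _ => by ring
        have e2 : ∑ T, P S T * h T = h S - 1 := by linarith
        rw [e1, e2]
        simp only [hg]
        nlinarith
      have hlow : ∀ T ∈ Finset.univ, 0 ≤ P S T * (g T - g b) := by
        intro T _
        exact mul_nonneg (hP0 S T) (by linarith [hbmin T (Finset.mem_univ T)])
      have htot : ∑ T, P S T * (g T - g b) ≤ 0 := by
        have e3 : ∑ T, P S T * (g T - g b)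
            = (∑ T, P S T * g T) - g b * ∑ T, P S T := by
          rw [Finset.mul_sum, ← Finset.sum_sub_distrib]
          refine Finset.sum_congr rfl fun T _ => by ring
        rw [e3, hP1 S]
        linarith [hgS ▸ hsum]
      have hzero' : ∀ T ∈ Finset.univ, P S T * (g T - g b) = 0 := by
        rw [← Finset.sum_eq_zero_iff_of_nonneg hlow]
        exact le_antisymm htot (Finset.sum_nonneg hlow)
      intro T hPT
      have := hzero' T (Finset.mem_univ T)
      have : g T - g b = 0 := by
        rcases mul_eq_zero.mp this with h' | h'
        · exact absurd h' (ne_of_gt hPT)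
        · exact h'
      simp only [hA, Finset.mem_filter, Finset.mem_univ, true_and]
      linarith
    -- take the minimizer of h over A
    have hAne : A.Nonempty := ⟨b, by simp [hA]⟩
    obtain ⟨c, hcA, hcmin⟩ := Finset.exists_min_image A h hAne
    have hψc : 0 < ψ c := (hAfacts c hcA).1
    have hrc := hrec c hψc
    have hsumc : h c ≤ ∑ T, P c T * h T := by
      calc h c = (∑ T, P c T) * h c := by rw [hP1 c]; ring
        _ = ∑ T, P c T * h c := by rw [Finset.sum_mul]
        _ ≤ ∑ T, P c T * h T := by
            refine Finset.sum_le_sum fun T _ => ?_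
            rcases (hP0 c T).lt_or_eq with hp | hp
            · exact mul_le_mul_of_nonneg_left
                (hcmin T ((hAfacts c hcA).2 T hp)) (hP0 c T)
            · rw [← hp]; simp
    linarith
  intro S hS
  have h1 : k₂ * h S ≤ k₁ := le_trans (key S) (hinit S hS)
  rw [le_div_iff₀ hk₂]
  linarith
end

section
/- If a nonnegative supermartingale (ψ_i) with ψ_0 ≤ k₁ satisfies E[ψ_{i+1} | F_i] ≤ ψ_i − k₂ on the event {ψ_i > 0} for constants k₁, k₂ > 0, then E[ψ_i · 1{τ > i}] ≤ k₁ − k₂·E[min(τ, i)] for all i, where τ = min{i : ψ_i = 0}. -/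
/-!
On the event `{τ > n}`, which is `ℱ n`-measurable, the drift condition gives
`E[ψ (n+1); τ > n] ≤ E[ψ n; τ > n] - k₂ P(τ > n)`, and since `ψ ≥ 0` and `{τ > n+1} ⊆ {τ > n}`
the left side dominates `E[ψ (n+1); τ > n+1]`. Telescoping from `E[ψ 0; τ > 0] ≤ k₁` and using
`min(τ, i) = ∑_{j<i} 1{τ > j}` gives the bound.
-/

open MeasureTheory

/-- The first hitting time of `0` by the process `ψ`, valued in `ℕ∞` (`⊤` if `ψ` never
vanishes). -/
noncomputable def zeroHitTime {Ω : Type*} (ψ : ℕ → Ω → ℝ) (ω : Ω) : ℕ∞ :=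
  sInf ((fun i : ℕ => (i : ℕ∞)) '' {i | ψ i ω = 0})

section

open Finset

variable {Ω : Type*} {m0 : MeasurableSpace Ω} {μ : Measure Ω}

lemma zeroHitTime_eq_hittingAfter (ψ : ℕ → Ω → ℝ) :
    zeroHitTime ψ = hittingAfter ψ {0} 0 := by
  ext ω : 1
  unfold hittingAfter zeroHitTime
  split_ifs with h
  · obtain ⟨j, -, hj⟩ := h
    have hS : {i | 0 ≤ i ∧ ψ i ω ∈ ({0} : Set ℝ)} = {i | ψ i ω = 0} := by simp
    rw [hS]
    exact sInf_image.trans (ENat.natCast_sInf ⟨j, hj⟩).symm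
  · push Not at h
    exact sInf_eq_top.2 (by simpa using h)

lemma zeroHitTime_le_of_eq_zero {ψ : ℕ → Ω → ℝ} {i : ℕ} {ω : Ω} (h : ψ i ω = 0) :
    zeroHitTime ψ ω ≤ i :=
  sInf_le ⟨i, h, rfl⟩

lemma isStoppingTime_zeroHitTime {ℱ : Filtration ℕ m0} {ψ : ℕ → Ω → ℝ}
    (hψ : Adapted ℱ ψ) : IsStoppingTime ℱ (zeroHitTime ψ) := by
  rw [zeroHitTime_eq_hittingAfter]
  exact hψ.isStoppingTime_hittingAfter (measurableSet_singleton 0)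

lemma ENat.toNat_min_natCast_eq_card_filter (t : ℕ∞) (i : ℕ) :
    (min t i).toNat = #{j ∈ range i | ((j : ℕ) : ℕ∞) < t} := by
  induction t using ENat.recTopCoe with
  | top => simp
  | coe n =>
    have : {j ∈ range i | j < n} = range (min n i) := by ext; simp; omega
    simp [← Nat.mono_cast.map_min, this]

lemma integral_toNat_min_natCast_eq_sum [IsFiniteMeasure μ] {τ : Ω → ℕ∞}
    (hτ : ∀ j : ℕ, MeasurableSet {ω | (j : ℕ∞) < τ ω}) (i : ℕ) :
    ∫ ω, ((min (τ ω) i).toNat : ℝ) ∂μ = ∑ j ∈ range i, μ.real {ω | (j : ℕ∞) < τ ω} := by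
  have hsum : ∀ ω, ((min (τ ω) i).toNat : ℝ)
      = ∑ j ∈ range i, {ω | (j : ℕ∞) < τ ω}.indicator 1 ω := by
    intro ω
    simp [ENat.toNat_min_natCast_eq_card_filter, Set.indicator_apply]
  simp_rw [hsum]
  rw [integral_finsetSum (range i) fun j _ => (integrable_const 1).indicator (hτ j)]
  exact sum_congr rfl fun j _ => integral_indicator_one (hτ j)

lemma setIntegral_le_sub_of_condExp_le [IsFiniteMeasure μ] {m : MeasurableSpace Ω} (hm : m ≤ m0)
    {f g : Ω → ℝ} {s : Set Ω} {c : ℝ} (hf : Integrable f μ) (hg : Integrable g μ)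
    (hs : MeasurableSet[m] s) (h : ∀ᵐ ω ∂μ, ω ∈ s → μ[g|m] ω ≤ f ω - c) :
    ∫ ω in s, g ω ∂μ ≤ ∫ ω in s, f ω ∂μ - c * μ.real s :=
  calc ∫ ω in s, g ω ∂μ = ∫ ω in s, μ[g|m] ω ∂μ := (setIntegral_condExp hm hg hs).symm
    _ ≤ ∫ ω in s, (f ω - c) ∂μ :=
        setIntegral_mono_on_ae integrable_condExp.integrableOn
          (hf.sub (integrable_const c)).integrableOn (hm s hs) h
    _ = ∫ ω in s, f ω ∂μ - c * μ.real s := by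
        rw [integral_sub hf.integrableOn (integrable_const c).integrableOn, setIntegral_const,
          smul_eq_mul, mul_comm]

theorem setIntegral_le_sub_sum_of_drift [IsFiniteMeasure μ] {ℱ : Filtration ℕ m0}
    {f : ℕ → Ω → ℝ} {A : ℕ → Set Ω} {k₁ k₂ : ℝ} (hA : ∀ n, MeasurableSet[ℱ n] (A n))
    (hA_anti : Antitone A) (hf : ∀ n, Integrable (f n) μ) (hf_nonneg : ∀ n, 0 ≤ᵐ[μ] f n)
    (h₀ : ∫ ω in A 0, f 0 ω ∂μ ≤ k₁)
    (hdrift : ∀ n, ∀ᵐ ω ∂μ, ω ∈ A n → μ[f (n + 1)|ℱ n] ω ≤ f n ω - k₂) (n : ℕ) :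
    ∫ ω in A n, f n ω ∂μ ≤ k₁ - k₂ * ∑ j ∈ range n, μ.real (A j) := by
  induction n with
  | zero => simpa using h₀
  | succ n ih =>
    calc ∫ ω in A (n + 1), f (n + 1) ω ∂μ ≤ ∫ ω in A n, f (n + 1) ω ∂μ :=
          setIntegral_mono_set (hf _).integrableOn (ae_restrict_of_ae (hf_nonneg _))
            (hA_anti n.le_succ).eventuallyLE
      _ ≤ ∫ ω in A n, f n ω ∂μ - k₂ * μ.real (A n) :=
          setIntegral_le_sub_of_condExp_le (ℱ.le n) (hf n) (hf _) (hA n) (hdrift n)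
      _ ≤ k₁ - k₂ * ∑ j ∈ range (n + 1), μ.real (A j) := by
          rw [sum_range_succ]
          linarith

end

open scoped Classical in
theorem stmt_8_general {Ω : Type*} {m0 : MeasurableSpace Ω} {μ : Measure Ω}
    [IsProbabilityMeasure μ] (ℱ : Filtration ℕ m0)
    (ψ : ℕ → Ω → ℝ) (k₁ k₂ : ℝ)
    (hnonneg : ∀ i ω, 0 ≤ ψ i ω)
    (hsuper : Supermartingale ψ ℱ μ)
    (hstart : ∀ ω, ψ 0 ω ≤ k₁)
    (hdrift : ∀ i, ∀ᵐ ω ∂μ, 0 < ψ i ω → (μ[ψ (i + 1)|ℱ i]) ω ≤ ψ i ω - k₂) :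
    ∀ i : ℕ,
      (∫ ω, (if (i : ℕ∞) < zeroHitTime ψ ω then ψ i ω else 0) ∂μ) ≤
        k₁ - k₂ * ∫ ω, ((min (zeroHitTime ψ ω) (i : ℕ∞)).toNat : ℝ) ∂μ := by
  intro i
  have hA : ∀ n : ℕ, MeasurableSet[ℱ n] {ω | (n : ℕ∞) < zeroHitTime ψ ω} :=
    (isStoppingTime_zeroHitTime hsuper.stronglyAdapted.adapted).measurableSet_gt
  have hlhs : ∫ ω, (if (i : ℕ∞) < zeroHitTime ψ ω then ψ i ω else 0) ∂μ
      = ∫ ω in {ω | (i : ℕ∞) < zeroHitTime ψ ω}, ψ i ω ∂μ := by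
    rw [← integral_indicator (ℱ.le i _ (hA i))]
    congr with ω
    simp [Set.indicator_apply]
  rw [hlhs, integral_toNat_min_natCast_eq_sum fun j => ℱ.le j _ (hA j)]
  refine setIntegral_le_sub_sum_of_drift hA (fun m n hmn ω hω => ?_) hsuper.integrable
    (fun n => ae_of_all _ (hnonneg n)) ?_ (fun n => ?_) i
  · exact (Nat.cast_le.2 hmn).trans_lt (show (n : ℕ∞) < zeroHitTime ψ ω from hω)
  · calc ∫ ω in _, ψ 0 ω ∂μ ≤ ∫ ω, ψ 0 ω ∂μ :=
          setIntegral_le_integral (hsuper.integrable 0) (ae_of_all _ (hnonneg 0))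
      _ ≤ k₁ := by simpa using integral_mono (hsuper.integrable 0) (integrable_const k₁) hstart
  · filter_upwards [hdrift n] with ω hω hn
    exact hω ((hnonneg n ω).lt_of_ne' fun h => hn.not_ge (zeroHitTime_le_of_eq_zero h))

open scoped Classical in
/-- If a nonnegative supermartingale `ψ` with `ψ₀ ≤ k₁` satisfies
`E[ψ_{i+1} | F_i] ≤ ψ_i - k₂` on the event `{ψ_i > 0}`, then
`E[ψ_i · 1{τ > i}] ≤ k₁ - k₂ · E[min(τ, i)]` for all `i`, where `τ` is the first hitting
time of `0` by `ψ`. -/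
theorem stmt_8 {Ω : Type*} {m0 : MeasurableSpace Ω} {μ : Measure Ω}
    [IsProbabilityMeasure μ] (ℱ : Filtration ℕ m0)
    (ψ : ℕ → Ω → ℝ) (k₁ k₂ : ℝ) (hk₁ : 0 < k₁) (hk₂ : 0 < k₂)
    (hnonneg : ∀ i ω, 0 ≤ ψ i ω)
    (hsuper : Supermartingale ψ ℱ μ)
    (hstart : ∀ ω, ψ 0 ω ≤ k₁)
    (hdrift : ∀ i, ∀ᵐ ω ∂μ, 0 < ψ i ω → (μ[ψ (i + 1)|ℱ i]) ω ≤ ψ i ω - k₂) :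
    ∀ i : ℕ,
      (∫ ω, (if (i : ℕ∞) < zeroHitTime ψ ω then ψ i ω else 0) ∂μ) ≤
        k₁ - k₂ * ∫ ω, ((min (zeroHitTime ψ ω) (i : ℕ∞)).toNat : ℝ) ∂μ :=
  stmt_8_general ℱ ψ k₁ k₂ hnonneg hsuper hstart hdrift
end

section
/- Let G be a finite connected graph on n ≥ 2 vertices and 0 < r < 1. The expected absorption time τ of the Moran process on G (with uniformly random initial mutant) satisfies E[τ] ≤ n³/(1−r). -/
open Finset

/-!
A step changes the potential `φ(S) = ∑_{x ∈ S} 1/deg x` only across an edge `xy` of the cut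
`(S, Sᶜ)`, `x ∈ S`: `x` uses it with rate `r/(W deg x)` and raises `φ` by `1/deg y`, while `y`
uses it with rate `1/(W deg y)` and lowers `φ` by `1/deg x`; here `W < n` is the total fitness.
So `φ` drifts by `-(1 - r)/W · ∑_{cut} 1/(deg x deg y) < -(1 - r)/n³` while `S` is proper and
nonempty. Then `h - n³/(1 - r) · φ` is strictly below its one-step average at every transient
state and `≤ 0` at the absorbing ones, so by the maximum principle it is `≤ 0` everywhere, and
`h {x} ≤ n³/(1 - r) · φ {x} ≤ n³/(1 - r)`.
-/

theorem nonpos_of_lt_sum_mul {ι : Type*} [Fintype ι] (P : ι → ι → ℝ) (f : ι → ℝ)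
    (p : ι → Prop) (hP₀ : ∀ i, p i → ∀ j, 0 ≤ P i j) (hP₁ : ∀ i, p i → ∑ j, P i j = 1)
    (hlt : ∀ i, p i → f i < ∑ j, P i j * f j) (hle : ∀ i, ¬ p i → f i ≤ 0) (i : ι) :
    f i ≤ 0 := by
  obtain ⟨k, -, hk⟩ := Finset.exists_max_image univ f ⟨i, mem_univ i⟩
  refine (hk i (mem_univ i)).trans (hle k fun hpk => (hlt k hpk).not_ge ?_)
  calc ∑ j, P k j * f j ≤ ∑ j, P k j * f k :=
        sum_le_sum fun j _ => mul_le_mul_of_nonneg_left (hk j (mem_univ j)) (hP₀ k hpk j)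
    _ = f k := by rw [← sum_mul, hP₁ k hpk, one_mul]

def moranFitness {V : Type*} [DecidableEq V] (r : ℝ) (S : Finset V) (x : V) : ℝ :=
  if x ∈ S then r else 1

def moranNext {V : Type*} [DecidableEq V] (S : Finset V) (x y : V) : Finset V :=
  if x ∈ S then insert y S else S.erase y

theorem moranFitness_pos {V : Type*} [DecidableEq V] {r : ℝ} (hr : 0 < r) (S : Finset V) (x : V) :
    0 < moranFitness r S x := by
  unfold moranFitness; split_ifs <;> positivity

theorem sum_moranFitness {V : Type*} [Fintype V] [DecidableEq V] (r : ℝ) (S : Finset V) :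
    ∑ x, moranFitness r S x = moranW r S := by
  have (x : V) : moranFitness r S x = (r - 1) * (if x ∈ S then 1 else 0) + 1 := by
    unfold moranFitness; split_ifs <;> ring
  simp only [this, sum_add_distrib, ← mul_sum, sum_boole, filter_mem_eq_inter, univ_inter,
    sum_const, card_univ, moranW, nsmul_eq_mul, mul_one]
  ring

theorem moranW_pos {V : Type*} [Fintype V] [DecidableEq V] [Nonempty V] {r : ℝ} (hr : 0 < r)
    (S : Finset V) : 0 < moranW r S := by
  rw [← sum_moranFitness]
  exact sum_pos (fun x _ => moranFitness_pos hr S x) univ_nonempty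

theorem moranW_lt_card {V : Type*} [Fintype V] {r : ℝ} (hr : r < 1) {S : Finset V}
    (hS : S.Nonempty) : moranW r S < Fintype.card V := by
  have : (0 : ℝ) < S.card := by exact_mod_cast hS.card_pos
  unfold moranW
  nlinarith

theorem SimpleGraph.Preconnected.exists_adj_mem_notMem {V : Type*} [Fintype V]
    {G : SimpleGraph V} (hG : G.Preconnected) {S : Finset V} (hS : S.Nonempty)
    (hS' : S ≠ univ) : ∃ u ∈ S, ∃ v ∉ S, G.Adj u v := by
  obtain ⟨a, ha⟩ := hS
  obtain ⟨b, hb⟩ : ∃ b, b ∉ S := by simpa [eq_univ_iff_forall] using hS'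
  obtain ⟨d, -, hd₁, hd₂⟩ := (hG a b).some.exists_boundary_dart (S : Set V) ha hb
  exact ⟨d.fst, hd₁, d.snd, hd₂, d.adj⟩

theorem SimpleGraph.Preconnected.degree_pos_of_nonempty_of_ne_univ {V : Type*} [Fintype V]
    {G : SimpleGraph V} [DecidableRel G.Adj] (hG : G.Preconnected) {S : Finset V}
    (hS : S.Nonempty) (hS' : S ≠ univ) (x : V) : 0 < G.degree x := by
  obtain ⟨u, -, v, -, huv⟩ := hG.exists_adj_mem_notMem hS hS'
  have : Nontrivial V := ⟨⟨u, v, huv.ne⟩⟩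
  exact hG.degree_pos_of_nontrivial x

theorem moranPhi_nonneg {V : Type*} [Fintype V] (G : SimpleGraph V) [DecidableRel G.Adj]
    (S : Finset V) : 0 ≤ moranPhi G S :=
  sum_nonneg fun x _ => by positivity

section
variable {V : Type*} [Fintype V] [DecidableEq V] (G : SimpleGraph V) [DecidableRel G.Adj]

theorem sum_moranP_mul (r : ℝ) (S : Finset V) (f : Finset V → ℝ) :
    ∑ T, moranP G r S T * f T =
      ∑ x, ∑ y ∈ G.neighborFinset x,
        moranFitness r S x / (moranW r S * G.degree x) * f (moranNext S x y) := by
  simp only [moranP, sum_mul, mul_assoc, ite_mul, one_mul, zero_mul]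
  rw [sum_comm]
  refine sum_congr rfl fun x _ => ?_
  rw [sum_comm]
  refine sum_congr rfl fun y _ => ?_
  simp only [mul_ite, mul_zero, sum_ite_eq, mem_univ, if_true]
  rfl

theorem sum_sum_moranFitness_div {r : ℝ} (S : Finset V) (hW : moranW r S ≠ 0)
    (hd : ∀ x, 0 < G.degree x) :
    ∑ x, ∑ _y ∈ G.neighborFinset x, moranFitness r S x / (moranW r S * G.degree x) = 1 := by
  have hrow (x : V) :
      ∑ _y ∈ G.neighborFinset x, moranFitness r S x / (moranW r S * G.degree x) =
      moranFitness r S x / moranW r S := by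
    have : (G.degree x : ℝ) ≠ 0 := by exact_mod_cast (hd x).ne'
    rw [sum_const, G.card_neighborFinset_eq_degree, nsmul_eq_mul]
    field_simp
  simp only [hrow, ← sum_div, sum_moranFitness, div_self hW]

theorem sum_moranP {r : ℝ} (S : Finset V) (hW : moranW r S ≠ 0) (hd : ∀ x, 0 < G.degree x) :
    ∑ T, moranP G r S T = 1 := by
  have h := sum_moranP_mul G r S 1
  simp only [Pi.one_apply, mul_one] at h
  rw [h, sum_sum_moranFitness_div G S hW hd]

theorem moranP_nonneg {r : ℝ} (hr : 0 < r) (S T : Finset V) : 0 ≤ moranP G r S T := by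
  have hW : 0 ≤ moranW r S := by
    rw [← sum_moranFitness]
    exact sum_nonneg fun x _ => (moranFitness_pos hr S x).le
  refine sum_nonneg fun x _ => sum_nonneg fun y _ => mul_nonneg ?_ (by split_ifs <;> norm_num)
  exact div_nonneg (moranFitness_pos hr S x).le (by positivity)

theorem moranPhi_moranNext (S : Finset V) (x y : V) :
    moranPhi G (moranNext S x y) = moranPhi G S +
      if x ∈ S ∧ y ∉ S then (1 : ℝ) / G.degree y
      else if x ∉ S ∧ y ∈ S then -(1 / G.degree y) else 0 := by
  unfold moranNext moranPhi
  by_cases hx : x ∈ S <;> by_cases hy : y ∈ S <;>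
    simp [hx, hy, sum_insert, sum_erase_eq_sub, sub_eq_add_neg, add_comm]

noncomputable def cutWeight (S : Finset V) : ℝ :=
  ∑ x, ∑ y,
    if G.Adj x y ∧ x ∈ S ∧ y ∉ S then 1 / ((G.degree x : ℝ) * G.degree y) else 0

theorem sum_moranP_mul_moranPhi {r : ℝ} (S : Finset V) (hW : moranW r S ≠ 0)
    (hd : ∀ x, 0 < G.degree x) :
    ∑ T, moranP G r S T * moranPhi G T = moranPhi G S - (1 - r) / moranW r S * cutWeight G S := by
  set Δ : V → V → ℝ := fun x y => if x ∈ S ∧ y ∉ S then (1 : ℝ) / G.degree y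
      else if x ∉ S ∧ y ∈ S then -(1 / G.degree y) else 0
  set a : V → V → ℝ := fun x y =>
    if G.Adj x y ∧ x ∈ S ∧ y ∉ S then 1 / ((G.degree x : ℝ) * G.degree y) else 0
  have hpair (x y : V) :
      (if G.Adj x y then moranFitness r S x / (moranW r S * G.degree x) * Δ x y else 0) =
        (r * a x y - a y x) / moranW r S := by
    by_cases hxy : G.Adj x y
    · by_cases hx : x ∈ S <;> by_cases hy : y ∈ S <;>
        simp [Δ, a, moranFitness, hxy, hxy.symm, hx, hy] <;> field_simp
    · simp [a, hxy, G.adj_comm y x]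
  have hdrift : ∑ x, ∑ y ∈ G.neighborFinset x,
      moranFitness r S x / (moranW r S * G.degree x) * Δ x y =
        -((1 - r) / moranW r S * cutWeight G S) := by
    simp only [G.neighborFinset_eq_filter, sum_filter, hpair]
    simp only [← sum_div, sum_sub_distrib, ← mul_sum]
    rw [sum_comm (f := fun x y => a y x)]
    simp only [cutWeight, a]
    ring
  calc ∑ T, moranP G r S T * moranPhi G T
      = ∑ x, ∑ y ∈ G.neighborFinset x,
          moranFitness r S x / (moranW r S * G.degree x) * (moranPhi G S + Δ x y) := by
        simp only [sum_moranP_mul, moranPhi_moranNext, Δ]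
    _ = moranPhi G S - (1 - r) / moranW r S * cutWeight G S := by
        simp only [mul_add, sum_add_distrib, ← sum_mul, sum_sum_moranFitness_div G S hW hd,
          hdrift]
        ring

theorem inv_card_sq_le_cutWeight (hG : G.Preconnected) {S : Finset V} (hS : S.Nonempty)
    (hS' : S ≠ univ) : ((Fintype.card V : ℝ) ^ 2)⁻¹ ≤ cutWeight G S := by
  obtain ⟨u, hu, v, hv, huv⟩ := hG.exists_adj_mem_notMem hS hS'
  have hdu : (0 : ℝ) < G.degree u := by
    exact_mod_cast (G.degree_pos_iff_exists_adj u).2 ⟨v, huv⟩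
  have hdv : (0 : ℝ) < G.degree v := by
    exact_mod_cast (G.degree_pos_iff_exists_adj v).2 ⟨u, huv.symm⟩
  have hnonneg (x y : V) : (0 : ℝ) ≤
      if G.Adj x y ∧ x ∈ S ∧ y ∉ S then 1 / ((G.degree x : ℝ) * G.degree y) else 0 := by
    split_ifs <;> positivity
  calc ((Fintype.card V : ℝ) ^ 2)⁻¹ ≤ 1 / ((G.degree u : ℝ) * G.degree v) := by
        rw [one_div, sq]
        gcongr <;> exact (G.degree_lt_card_verts _).le
    _ = if G.Adj u v ∧ u ∈ S ∧ v ∉ S then 1 / ((G.degree u : ℝ) * G.degree v) else 0 := by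
        rw [if_pos ⟨huv, hu, hv⟩]
    _ ≤ cutWeight G S :=
        (single_le_sum (fun y _ => hnonneg u y) (mem_univ v)).trans
          (single_le_sum (fun x _ => sum_nonneg fun y _ => hnonneg x y) (mem_univ u))

theorem sum_moranP_mul_moranPhi_lt (hG : G.Preconnected) {r : ℝ} (hr₀ : 0 < r) (hr₁ : r < 1)
    {S : Finset V} (hS : S.Nonempty) (hS' : S ≠ univ) :
    ∑ T, moranP G r S T * moranPhi G T < moranPhi G S - (1 - r) / (Fintype.card V : ℝ) ^ 3 := by
  have : Nonempty V := hS.to_type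
  have hW := moranW_pos hr₀ S
  rw [sum_moranP_mul_moranPhi G S hW.ne' (hG.degree_pos_of_nonempty_of_ne_univ hS hS')]
  gcongr moranPhi G S - ?_
  calc (1 - r) / (Fintype.card V : ℝ) ^ 3
      = (1 - r) / Fintype.card V * ((Fintype.card V : ℝ) ^ 2)⁻¹ := by
        field_simp
    _ < (1 - r) / moranW r S * ((Fintype.card V : ℝ) ^ 2)⁻¹ := by
        gcongr
        exact moranW_lt_card hr₁ hS
    _ ≤ (1 - r) / moranW r S * cutWeight G S := by
        gcongr
        exact inv_card_sq_le_cutWeight G hG hS hS'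

theorem le_mul_moranPhi_of_hittingTime (hG : G.Preconnected) {r : ℝ} (hr₀ : 0 < r)
    (hr₁ : r < 1) (h : Finset V → ℝ) (habs0 : h ∅ = 0) (habs1 : h univ = 0)
    (hrec : ∀ S : Finset V, S ≠ ∅ → S ≠ univ → h S = 1 + ∑ T, moranP G r S T * h T)
    (S : Finset V) : h S ≤ (Fintype.card V : ℝ) ^ 3 / (1 - r) * moranPhi G S := by
  set c := (Fintype.card V : ℝ) ^ 3 / (1 - r)
  have hc : 0 ≤ c := div_nonneg (by positivity) (by linarith)
  rw [← sub_nonpos]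
  refine nonpos_of_lt_sum_mul (moranP G r) (fun S => h S - c * moranPhi G S)
    (fun S => S.Nonempty ∧ S ≠ univ) (fun S _ T => moranP_nonneg G hr₀ S T)
    (fun S ⟨hS, hS'⟩ => sum_moranP G S (have := hS.to_type; moranW_pos hr₀ S).ne'
      (hG.degree_pos_of_nonempty_of_ne_univ hS hS')) ?_ ?_ S
  · rintro S ⟨hS, hS'⟩
    have : Nonempty V := hS.to_type
    have hn : (0 : ℝ) < Fintype.card V := by exact_mod_cast Fintype.card_pos
    -- in expectation `c · φ` drops by more than one per step, while `h` drops by exactly one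
    have hdrift : c * ∑ T, moranP G r S T * moranPhi G T < c * moranPhi G S - 1 := by
      calc c * ∑ T, moranP G r S T * moranPhi G T
          < c * (moranPhi G S - (1 - r) / (Fintype.card V : ℝ) ^ 3) := by
            gcongr
            exact sum_moranP_mul_moranPhi_lt G hG hr₀ hr₁ hS hS'
        _ = c * moranPhi G S - 1 := by
            have : 1 - r ≠ 0 := by linarith
            simp only [c]; field_simp
    have hsplit : ∑ T, moranP G r S T * (h T - c * moranPhi G T) =
        ∑ T, moranP G r S T * h T - c * ∑ T, moranP G r S T * moranPhi G T := by
      simp only [mul_sub, sum_sub_distrib, mul_sum, mul_left_comm c]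
    rw [hsplit, hrec S hS.ne_empty hS']
    linarith
  · intro S hS
    rcases not_and_or.1 hS with hS | hS
    · rw [not_nonempty_iff_eq_empty.1 hS, habs0, moranPhi, sum_empty, mul_zero, sub_zero]
    · rw [not_not.1 hS, habs1, zero_sub, neg_nonpos]
      exact mul_nonneg hc (moranPhi_nonneg G univ)

end

theorem stmt_9_general {V : Type*} [Fintype V] [DecidableEq V] (G : SimpleGraph V)
    [DecidableRel G.Adj] (hG : G.Connected)
    (r : ℝ) (hr0 : 0 < r) (hr1 : r < 1)
    (h : Finset V → ℝ)
    (habs0 : h ∅ = 0) (habs1 : h Finset.univ = 0)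
    (hrec : ∀ S : Finset V, S ≠ ∅ → S ≠ Finset.univ →
      h S = 1 + ∑ T : Finset V, moranP G r S T * h T) :
    (1 / (Fintype.card V : ℝ)) * ∑ x : V, h {x} ≤ (Fintype.card V : ℝ) ^ 3 / (1 - r) := by
  set c := (Fintype.card V : ℝ) ^ 3 / (1 - r)
  have hc : 0 ≤ c := div_nonneg (by positivity) (by linarith)
  have hn : (0 : ℝ) < Fintype.card V := by
    have := hG.nonempty
    exact_mod_cast Fintype.card_pos
  have hsingle (x : V) : h {x} ≤ c :=
    calc h {x} ≤ c * moranPhi G {x} :=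
          le_mul_moranPhi_of_hittingTime G hG.preconnected hr0 hr1 h habs0 habs1 hrec {x}
      _ ≤ c := by
          rw [moranPhi, sum_singleton, one_div]
          exact mul_le_of_le_one_right hc (Nat.cast_inv_le_one _)
  calc (1 / (Fintype.card V : ℝ)) * ∑ x : V, h {x}
      ≤ (1 / (Fintype.card V : ℝ)) * ∑ _x : V, c := by
        gcongr with x
        exact hsingle x
    _ = c := by
        rw [sum_const, card_univ, nsmul_eq_mul]
        field_simp

/-- For a finite connected graph on `n ≥ 2` vertices and `0 < r < 1`, the expected
absorption time of the Moran process with a uniformly random initial mutant is at most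
`n³/(1-r)`.  Here `h S` is the expected absorption time started from mutant set `S`,
characterised as a nonnegative solution of the standard hitting-time recurrence. -/
theorem stmt_9 {V : Type*} [Fintype V] [DecidableEq V] (G : SimpleGraph V)
    [DecidableRel G.Adj] (hG : G.Connected) (hn : 2 ≤ Fintype.card V)
    (r : ℝ) (hr0 : 0 < r) (hr1 : r < 1)
    (h : Finset V → ℝ) (hpos : ∀ S, 0 ≤ h S)
    (habs0 : h ∅ = 0) (habs1 : h Finset.univ = 0)
    (hrec : ∀ S : Finset V, S ≠ ∅ → S ≠ Finset.univ →
      h S = 1 + ∑ T : Finset V, moranP G r S T * h T) :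
    (1 / (Fintype.card V : ℝ)) * ∑ x : V, h {x} ≤ (Fintype.card V : ℝ) ^ 3 / (1 - r) :=
  stmt_9_general G hG r hr0 hr1 h habs0 habs1 hrec
end

section
/- Under the hypotheses above (|ψ_t| ≤ m, supermartingale-type drift E[ψ_{t+1}|F_t] ≤ ψ_t, and E[(ψ_{t+1}−ψ_t)²|F_t] ≥ c on {|ψ_t| < m}), the process Z_t defined by Z_t = ψ_t² − 2mψ_t − ct for t < t₀ and Z_t = 3m² − c·t₀ for t ≥ t₀ is a submartingale. -/
/-!
Since `ψ² - 2mψ = (ψ - m)² - m²`, before the hitting time `t₀` the increment of `Z` is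
`(ψ_{t+1} - m)² - (ψ_t - m)² - c = δ² + 2 (ψ_t - m) δ - c` with `δ = ψ_{t+1} - ψ_t`, and at
`t + 1 = t₀` it is at least that, because the frozen value `3m² = (2m)² - m²` dominates
`(ψ_{t₀} - m)² - m²` when `|ψ_{t₀}| ≤ m`. Conditionally on `ℱ_t` the cross term is
nonnegative, as `ψ_t - m ≤ 0` and `E[δ | ℱ_t] ≤ 0`, while `E[δ² | ℱ_t] ≥ c` on `{t < t₀}`.
-/

open MeasureTheory Filter

section HittingTime

variable {Ω : Type*} {m0 : MeasurableSpace Ω} {ℱ : Filtration ℕ m0}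

theorem measurableSet_sInf_setOf_le {β : Type*} [MeasurableSpace β] {u : ℕ → Ω → β}
    {s : Set β} (hu : Adapted ℱ u) (hs : MeasurableSet s) (hhit : ∀ ω, ∃ t, u t ω ∈ s)
    (k : ℕ) : MeasurableSet[ℱ k] {ω | sInf {t | u t ω ∈ s} ≤ k} := by
  have hset : {ω | sInf {t | u t ω ∈ s} ≤ k} = ⋃ j ≤ k, u j ⁻¹' s := by
    ext ω
    simp only [Set.mem_ofPred_eq, Set.mem_iUnion, Set.mem_preimage, exists_prop]
    exact ⟨fun h => ⟨_, h, Nat.sInf_mem (hhit ω)⟩,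
      fun ⟨j, hjk, hj⟩ => (Nat.sInf_le hj).trans hjk⟩
  rw [hset]
  exact MeasurableSet.biUnion (Set.to_countable _) fun j hj => ℱ.mono hj _ (hu j hs)

theorem measurable_min_of_measurableSet_le {T : Ω → ℕ}
    (hT : ∀ k, MeasurableSet[ℱ k] {ω | T ω ≤ k}) (t : ℕ) :
    Measurable[ℱ t] fun ω => min (T ω) t := by
  refine measurable_of_Iic fun k => ?_
  by_cases htk : t ≤ k
  · have hset : (fun ω => min (T ω) t) ⁻¹' Set.Iic k = Set.univ :=
      Set.eq_univ_of_forall fun ω => (min_le_right _ _).trans htk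
    rw [hset]
    exact MeasurableSet.univ
  · have hset : (fun ω => min (T ω) t) ⁻¹' Set.Iic k = {ω | T ω ≤ k} := by
      ext ω
      simp only [Set.mem_preimage, Set.mem_Iic, Set.mem_ofPred_eq]
      omega
    rw [hset]
    exact ℱ.mono (by omega) _ (hT k)

end HittingTime

section Supermartingale

variable {Ω : Type*} {m0 : MeasurableSpace Ω} {μ : Measure Ω} {ℱ : Filtration ℕ m0}
  {ψ : ℕ → Ω → ℝ}

theorem MeasureTheory.Supermartingale.condExp_sub_nonpos (hψ : Supermartingale ψ ℱ μ) (t : ℕ) :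
    μ[ψ (t + 1) - ψ t | ℱ t] ≤ᵐ[μ] 0 := by
  have hneg : -ψ (t + 1) - -ψ t = -(ψ (t + 1) - ψ t) := by abel
  have h := hψ.neg.condExp_sub_nonneg (Nat.le_succ t)
  simp only [Pi.neg_apply, hneg] at h
  filter_upwards [h, condExp_neg (ψ (t + 1) - ψ t) (ℱ t)] with ω hω hω'
  rw [hω', Pi.neg_apply, Pi.zero_apply] at hω
  simpa using hω

theorem MeasureTheory.Supermartingale.condExp_sq_sub_le [IsFiniteMeasure μ]
    (hψ : Supermartingale ψ ℱ μ) {t : ℕ} (h₀ : MemLp (ψ t) 2 μ) (h₁ : MemLp (ψ (t + 1)) 2 μ)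
    (a : ℝ) :
    ∀ᵐ ω ∂μ, ψ t ω ≤ a →
      μ[fun ω => (ψ (t + 1) ω - ψ t ω) ^ 2 | ℱ t] ω ≤
        μ[fun ω => (ψ (t + 1) ω - a) ^ 2 - (ψ t ω - a) ^ 2 | ℱ t] ω := by
  set δ := ψ (t + 1) - ψ t
  have hδ : MemLp δ 2 μ := h₁.sub h₀
  have hexpand : (fun ω => (ψ (t + 1) ω - a) ^ 2 - (ψ t ω - a) ^ 2) =
      (fun ω => δ ω ^ 2) + (fun ω => 2 * (ψ t ω - a)) * δ := by
    funext ω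
    simp only [δ, Pi.add_apply, Pi.mul_apply, Pi.sub_apply]
    ring
  have hcoeff : StronglyMeasurable[ℱ t] fun ω => 2 * (ψ t ω - a) :=
    ((hψ.stronglyAdapted t).sub stronglyMeasurable_const).const_mul 2
  have hcross : Integrable ((fun ω => 2 * (ψ t ω - a)) * δ) μ :=
    ((h₀.sub (memLp_const a)).const_mul 2).integrable_mul hδ
  filter_upwards [condExp_add hδ.integrable_sq hcross (ℱ t),
    condExp_mul_of_stronglyMeasurable_left hcoeff hcross (hδ.integrable one_le_two),
    hψ.condExp_sub_nonpos t] with ω hadd hpull hdrift hle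
  rw [hexpand, hadd, Pi.add_apply, hpull, Pi.mul_apply]
  exact le_add_of_nonneg_right (mul_nonneg_of_nonpos_of_nonpos (by linarith) hdrift)

end Supermartingale

section StoppedQuadraticProcess

variable {Ω : Type*} {m0 : MeasurableSpace Ω} {μ : Measure Ω} {ℱ : Filtration ℕ m0}
  {ψ : ℕ → Ω → ℝ} {m c : ℝ} {T : Ω → ℕ}

def stoppedQuadraticProcess (ψ : ℕ → Ω → ℝ) (m c : ℝ) (T : Ω → ℕ) : ℕ → Ω → ℝ :=
  fun t ω => if t < T ω then ψ t ω ^ 2 - 2 * m * ψ t ω - c * t else 3 * m ^ 2 - c * T ω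

theorem stronglyAdapted_stoppedQuadraticProcess (hψ : Adapted ℱ ψ)
    (hT : ∀ k, MeasurableSet[ℱ k] {ω | T ω ≤ k}) :
    StronglyAdapted ℱ (stoppedQuadraticProcess ψ m c T) := by
  intro t
  have hA : MeasurableSet[ℱ t] {ω | t < T ω} := by
    simpa only [Set.compl_ofPred, not_le] using (hT t).compl
  have heq : stoppedQuadraticProcess ψ m c T t = fun ω =>
      if t < T ω then ψ t ω ^ 2 - 2 * m * ψ t ω - c * t
      else 3 * m ^ 2 - c * (min (T ω) t : ℕ) := by
    funext ω
    simp only [stoppedQuadraticProcess]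
    split_ifs with h
    · rfl
    · rw [min_eq_left (not_lt.1 h)]
  rw [heq]
  refine (Measurable.ite hA ?_ ?_).stronglyMeasurable
  · exact (((hψ t).pow_const 2).sub ((hψ t).const_mul _)).sub_const _
  · exact ((measurable_from_top.comp (measurable_min_of_measurableSet_le hT t)).const_mul
      c).const_sub _

theorem integrable_stoppedQuadraticProcess [IsFiniteMeasure μ] (hψ : Adapted ℱ ψ)
    (hT : ∀ k, MeasurableSet[ℱ k] {ω | T ω ≤ k}) (hbdd : ∀ t ω, |ψ t ω| ≤ m) (t : ℕ) :
    Integrable (stoppedQuadraticProcess ψ m c T t) μ := by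
  refine Integrable.of_bound
    (((stronglyAdapted_stoppedQuadraticProcess hψ hT) t).mono (ℱ.le t)).aestronglyMeasurable
    (3 * m ^ 2 + |c| * t) (ae_of_all _ fun ω => ?_)
  have hct : |c * t| ≤ |c| * t := by simp [abs_mul]
  have hψt := abs_le.1 (hbdd t ω)
  simp only [stoppedQuadraticProcess, Real.norm_eq_abs]
  split_ifs with h
  · have hquad : |ψ t ω ^ 2 - 2 * m * ψ t ω| ≤ 3 * m ^ 2 := by
      rw [abs_le]
      constructor <;> nlinarith
    exact (abs_sub _ _).trans (add_le_add hquad hct)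
  · have hcT : |c * T ω| ≤ |c| * t := by
      rw [abs_mul, Nat.abs_cast]
      exact mul_le_mul_of_nonneg_left (by exact_mod_cast not_lt.1 h) (abs_nonneg c)
    exact (abs_sub _ _).trans (add_le_add (by rw [abs_of_nonneg (by positivity)]) hcT)

theorem indicator_le_stoppedQuadraticProcess_succ_sub {t : ℕ} {ω : Ω}
    (h : |ψ (t + 1) ω| ≤ m) :
    {ω | t < T ω}.indicator (fun ω => (ψ (t + 1) ω - m) ^ 2 - (ψ t ω - m) ^ 2 - c) ω ≤
      stoppedQuadraticProcess ψ m c T (t + 1) ω - stoppedQuadraticProcess ψ m c T t ω := by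
  simp only [stoppedQuadraticProcess, Set.indicator_apply, Set.mem_ofPred_eq]
  by_cases ht : t < T ω
  · by_cases ht₁ : t + 1 < T ω
    · rw [if_pos ht, if_pos ht₁, if_pos ht]
      push_cast
      linarith
    · have hT : T ω = t + 1 := by omega
      have := abs_le.1 h
      rw [if_pos ht, if_neg ht₁, if_pos ht, hT]
      push_cast
      nlinarith
  · simp [ht, show ¬ t + 1 < T ω by omega]

theorem condExp_stoppedQuadraticProcess_succ_sub_nonneg [IsFiniteMeasure μ]
    (hψ : Supermartingale ψ ℱ μ) (hbdd : ∀ t ω, |ψ t ω| ≤ m)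
    (hvar : ∀ t, ∀ᵐ ω ∂μ, |ψ t ω| < m →
      c ≤ (μ[fun ω' => (ψ (t + 1) ω' - ψ t ω') ^ 2|ℱ t]) ω)
    (hT : ∀ k, MeasurableSet[ℱ k] {ω | T ω ≤ k}) (hlt : ∀ t ω, t < T ω → |ψ t ω| < m)
    (t : ℕ) :
    0 ≤ᵐ[μ] μ[stoppedQuadraticProcess ψ m c T (t + 1) - stoppedQuadraticProcess ψ m c T t|ℱ t] := by
  have hA : MeasurableSet[ℱ t] {ω | t < T ω} := by
    simpa only [Set.compl_ofPred, not_le] using (hT t).compl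
  have hL2 (s : ℕ) : MemLp (ψ s) 2 μ :=
    .of_bound (hψ.integrable s).aestronglyMeasurable m (ae_of_all _ (hbdd s))
  set D := fun ω => (ψ (t + 1) ω - m) ^ 2 - (ψ t ω - m) ^ 2
  have hD : Integrable D μ :=
    ((hL2 (t + 1)).sub (memLp_const m)).integrable_sq.sub
      ((hL2 t).sub (memLp_const m)).integrable_sq
  have hDc : Integrable (D - fun _ => c) μ := hD.sub (integrable_const c)
  have hZ := integrable_stoppedQuadraticProcess (μ := μ) (c := c) hψ.stronglyAdapted.adapted hT hbdd
  have hmono := condExp_mono (m := ℱ t) (hDc.indicator (ℱ.le t _ hA)) ((hZ (t + 1)).sub (hZ t))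
    (ae_of_all _ fun ω => indicator_le_stoppedQuadraticProcess_succ_sub (hbdd (t + 1) ω))
  filter_upwards [hmono, condExp_indicator hDc hA, condExp_sub hD (integrable_const c) (ℱ t),
    hψ.condExp_sq_sub_le (hL2 t) (hL2 (t + 1)) m, hvar t] with ω hmono hind hsub hsq hc
  refine le_trans ?_ hmono
  rw [hind]
  refine Set.indicator_apply_nonneg fun hω => ?_
  rw [hsub, Pi.sub_apply, condExp_const (ℱ.le t)]
  have hω' := hlt t ω hω
  linarith [hsq (abs_le.1 hω'.le).2, hc hω']

theorem MeasureTheory.Supermartingale.submartingale_stoppedQuadraticProcess [IsFiniteMeasure μ]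
    (hψ : Supermartingale ψ ℱ μ) (hbdd : ∀ t ω, |ψ t ω| ≤ m)
    (hvar : ∀ t, ∀ᵐ ω ∂μ, |ψ t ω| < m →
      c ≤ (μ[fun ω' => (ψ (t + 1) ω' - ψ t ω') ^ 2|ℱ t]) ω)
    (hT : ∀ k, MeasurableSet[ℱ k] {ω | T ω ≤ k}) (hlt : ∀ t ω, t < T ω → |ψ t ω| < m) :
    Submartingale (stoppedQuadraticProcess ψ m c T) ℱ μ :=
  submartingale_of_condExp_sub_nonneg_nat
    (stronglyAdapted_stoppedQuadraticProcess hψ.stronglyAdapted.adapted hT)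
    (integrable_stoppedQuadraticProcess hψ.stronglyAdapted.adapted hT hbdd)
    (condExp_stoppedQuadraticProcess_succ_sub_nonneg hψ hbdd hvar hT hlt)

end StoppedQuadraticProcess

open scoped Classical in
theorem stmt_13_general {Ω : Type*} {m0 : MeasurableSpace Ω} {μ : Measure Ω}
    [IsProbabilityMeasure μ] (ℱ : Filtration ℕ m0)
    (ψ : ℕ → Ω → ℝ) (m c : ℝ)
    (hbdd : ∀ t ω, |ψ t ω| ≤ m)
    (hsuper : Supermartingale ψ ℱ μ)
    (hvar : ∀ t, ∀ᵐ ω ∂μ, |ψ t ω| < m →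
      c ≤ (μ[fun ω' => (ψ (t + 1) ω' - ψ t ω') ^ 2|ℱ t]) ω)
    (hhit : ∀ ω, ∃ t, |ψ t ω| = m) :
    Submartingale
      (fun t ω =>
        if t < sInf {s : ℕ | |ψ s ω| = m} then
          ψ t ω ^ 2 - 2 * m * ψ t ω - c * t
        else 3 * m ^ 2 - c * (sInf {s : ℕ | |ψ s ω| = m} : ℕ))
      ℱ μ :=
  hsuper.submartingale_stoppedQuadraticProcess hbdd hvar
    (measurableSet_sInf_setOf_le (s := {x | |x| = m}) hsuper.stronglyAdapted.adapted
      (measurableSet_eq_fun measurable_abs measurable_const) hhit)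
    (fun t ω ht => (hbdd t ω).lt_of_ne (Nat.notMem_of_lt_sInf ht))

open scoped Classical in
/-- With `|ψ_t| ≤ m`, supermartingale-type drift `E[ψ_{t+1}|F_t] ≤ ψ_t`, and
`E[(ψ_{t+1} - ψ_t)²|F_t] ≥ c` on `{|ψ_t| < m}`, the process
`Z_t = ψ_t² - 2mψ_t - ct` for `t < t₀` and `Z_t = 3m² - c·t₀` for `t ≥ t₀` is a
submartingale, where `t₀ = min{t : |ψ_t| = m}`. -/
theorem stmt_13 {Ω : Type*} {m0 : MeasurableSpace Ω} {μ : Measure Ω}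
    [IsProbabilityMeasure μ] (ℱ : Filtration ℕ m0)
    (ψ : ℕ → Ω → ℝ) (m c : ℝ) (hc : 0 < c)
    (hbdd : ∀ t ω, |ψ t ω| ≤ m)
    (hsuper : Supermartingale ψ ℱ μ)
    (hvar : ∀ t, ∀ᵐ ω ∂μ, |ψ t ω| < m →
      c ≤ (μ[fun ω' => (ψ (t + 1) ω' - ψ t ω') ^ 2|ℱ t]) ω)
    (hhit : ∀ ω, ∃ t, |ψ t ω| = m) :
    Submartingale
      (fun t ω =>
        if t < sInf {s : ℕ | |ψ s ω| = m} then
          ψ t ω ^ 2 - 2 * m * ψ t ω - c * t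
        else 3 * m ^ 2 - c * (sInf {s : ℕ | |ψ s ω| = m} : ℕ))
      ℱ μ :=
  stmt_13_general ℱ ψ m c hbdd hsuper hvar hhit
end
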